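/- arXiv:2401.14834 — 2 statements merged into one kernel-verified Lean document; each statement's English description precedes it below -/
import Mathlib

section
/- Let 𝓛 be a category with zero morphisms equipped with a pre-summability structure (S, π₀, π₁, σ) satisfying (S-wit), with flip c_X ∈ 𝓛(S²X, S²X). If f₀, f₁ ∈ 𝓛(X,Y) are summable, then S(f₀) and S(f₁) ∈ 𝓛(S X, S Y) are summable, with witness ⟨S f₀, S f₁⟩ = c_Y∘S(⟨f₀,f₁⟩), and S(f₀) + S(f₁) = S(f₀ + f₁). -/
open CategoryTheory Limits

universe v u

/-- A pre-summability structure on a category with zero morphisms: a functor `S`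
together with jointly monic natural transformations `π₀, π₁ : S ⟶ 𝟭 C` and a
natural transformation `σ : S ⟶ 𝟭 C`. -/
structure PreSummability (C : Type u) [Category.{v} C] [HasZeroMorphisms C] where
  S : C ⥤ C
  π0 : S ⟶ 𝟭 C
  π1 : S ⟶ 𝟭 C
  σ : S ⟶ 𝟭 C
  jointly_monic : ∀ {Y X : C} (f g : Y ⟶ S.obj X),
    f ≫ π0.app X = g ≫ π0.app X → f ≫ π1.app X = g ≫ π1.app X → f = g

namespace PreSummability

variable {C : Type u} [Category.{v} C] [HasZeroMorphisms C] (P : PreSummability C)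

/-- Two morphisms are summable when they admit a (necessarily unique) witness. -/
def Summable {Y X : C} (f₀ f₁ : Y ⟶ X) : Prop :=
  ∃ h : Y ⟶ P.S.obj X, h ≫ P.π0.app X = f₀ ∧ h ≫ P.π1.app X = f₁

/-- The witness `⟨f₀, f₁⟩` of a summable pair (an arbitrary value if the pair is
not summable). -/
noncomputable def witness {Y X : C} (f₀ f₁ : Y ⟶ X) : Y ⟶ P.S.obj X :=
  @dite _ (P.Summable f₀ f₁) (Classical.propDecidable _) (fun h => h.choose) (fun _ => 0)

/-- The sum `f₀ + f₁ = σ ∘ ⟨f₀, f₁⟩` of a summable pair. -/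
noncomputable def sum {Y X : C} (f₀ f₁ : Y ⟶ X) : Y ⟶ X :=
  P.witness f₀ f₁ ≫ P.σ.app X

/-- Projections indexed by a boolean. -/
def pr (i : Bool) : P.S ⟶ 𝟭 C := if i then P.π1 else P.π0

/-- Axiom (S-com): `π₁` and `π₀` are summable with `π₁ + π₀ = σ`. -/
def SCom : Prop := ∀ X : C,
  P.Summable (P.π1.app X) (P.π0.app X) ∧ P.sum (P.π1.app X) (P.π0.app X) = P.σ.app X

/-- Axiom (S-zero): `0` and `id` are summable with `0 + id = id`. -/
def SZero : Prop := ∀ X : C,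
  P.Summable (0 : X ⟶ X) (𝟙 X) ∧ P.sum (0 : X ⟶ X) (𝟙 X) = 𝟙 X

/-- Axiom (S-wit): if `σ∘f₀` and `σ∘f₁` are summable then `f₀` and `f₁` are summable. -/
def SWit : Prop := ∀ (X Y : C) (f₀ f₁ : X ⟶ P.S.obj Y),
  P.Summable (f₀ ≫ P.σ.app Y) (f₁ ≫ P.σ.app Y) → P.Summable f₀ f₁

end PreSummability

open PreSummability

/-! Applying `S` to the witness `⟨f₀, f₁⟩ : X ⟶ S Y` gives `S X ⟶ S (S Y)` with the two layers of
projections in the wrong order; composing with the flip puts them right, since `c ≫ πᵢ (S Y) = S (πᵢ Y)`.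
The sum is then preserved because `c ≫ σ (S Y) = S (σ Y)`: both sides are determined by their
projections, and there the identity reduces to naturality of `σ` and `πᵢ`. -/

namespace PreSummability

variable {C : Type u} [Category.{v} C] [HasZeroMorphisms C] (P : PreSummability C)

lemma hom_ext {Y X : C} {f g : Y ⟶ P.S.obj X}
    (h : ∀ i : Bool, f ≫ (P.pr i).app X = g ≫ (P.pr i).app X) : f = g :=
  P.jointly_monic f g (h false) (h true)

lemma map_comp_pr_app {A B : C} (i : Bool) (g : A ⟶ B) :
    P.S.map g ≫ (P.pr i).app B = (P.pr i).app A ≫ g :=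
  (P.pr i).naturality g

lemma map_comp_σ_app {A B : C} (g : A ⟶ B) :
    P.S.map g ≫ P.σ.app B = P.σ.app A ≫ g :=
  P.σ.naturality g

section Witness

variable {P} {Y X : C} {f₀ f₁ : Y ⟶ X}

lemma witness_comp_π0 (hs : P.Summable f₀ f₁) : P.witness f₀ f₁ ≫ P.π0.app X = f₀ := by
  rw [witness, dif_pos hs]
  exact hs.choose_spec.1

lemma witness_comp_π1 (hs : P.Summable f₀ f₁) : P.witness f₀ f₁ ≫ P.π1.app X = f₁ := by
  rw [witness, dif_pos hs]
  exact hs.choose_spec.2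

lemma witness_eq_of_comp {w : Y ⟶ P.S.obj X} (h₀ : w ≫ P.π0.app X = f₀)
    (h₁ : w ≫ P.π1.app X = f₁) : P.witness f₀ f₁ = w :=
  have hs : P.Summable f₀ f₁ := ⟨w, h₀, h₁⟩
  P.jointly_monic _ _ (by rw [witness_comp_π0 hs, h₀]) (by rw [witness_comp_π1 hs, h₁])

end Witness

def IsFlip (c : ∀ X : C, P.S.obj (P.S.obj X) ⟶ P.S.obj (P.S.obj X)) : Prop :=
  ∀ (X : C) (i j : Bool),
    c X ≫ (P.pr j).app (P.S.obj X) ≫ (P.pr i).app X = (P.pr i).app (P.S.obj X) ≫ (P.pr j).app X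

namespace IsFlip

variable {P} {c : ∀ X : C, P.S.obj (P.S.obj X) ⟶ P.S.obj (P.S.obj X)}

lemma comp_pr_app (hc : P.IsFlip c) (X : C) (i : Bool) :
    c X ≫ (P.pr i).app (P.S.obj X) = P.S.map ((P.pr i).app X) :=
  P.hom_ext fun j => by
    rw [Category.assoc, hc X j i]
    exact (P.map_comp_pr_app j _).symm

lemma comp_map_pr_app (hc : P.IsFlip c) (X : C) (i : Bool) :
    c X ≫ P.S.map ((P.pr i).app X) = (P.pr i).app (P.S.obj X) :=
  P.hom_ext fun j => by
    rw [Category.assoc, map_comp_pr_app]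
    exact hc X i j

lemma comp_σ_app (hc : P.IsFlip c) (X : C) :
    c X ≫ P.σ.app (P.S.obj X) = P.S.map (P.σ.app X) :=
  P.hom_ext fun j => by
    rw [Category.assoc, ← map_comp_σ_app, ← Category.assoc, hc.comp_map_pr_app]
    exact (P.map_comp_pr_app j _).symm

lemma map_comp_comp_pr_app (hc : P.IsFlip c) {X Y : C} (h : Y ⟶ P.S.obj X) (i : Bool) :
    (P.S.map h ≫ c X) ≫ (P.pr i).app (P.S.obj X) = P.S.map (h ≫ (P.pr i).app X) := by
  rw [Category.assoc, hc.comp_pr_app, Functor.map_comp]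

variable {X Y : C} {f₀ f₁ : X ⟶ Y}

lemma map_witness_comp_comp_π0 (hc : P.IsFlip c) (hs : P.Summable f₀ f₁) :
    (P.S.map (P.witness f₀ f₁) ≫ c Y) ≫ P.π0.app (P.S.obj Y) = P.S.map f₀ :=
  (hc.map_comp_comp_pr_app _ false).trans (congrArg P.S.map (witness_comp_π0 hs))

lemma map_witness_comp_comp_π1 (hc : P.IsFlip c) (hs : P.Summable f₀ f₁) :
    (P.S.map (P.witness f₀ f₁) ≫ c Y) ≫ P.π1.app (P.S.obj Y) = P.S.map f₁ :=
  (hc.map_comp_comp_pr_app _ true).trans (congrArg P.S.map (witness_comp_π1 hs))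

lemma summable_map (hc : P.IsFlip c) (hs : P.Summable f₀ f₁) :
    P.Summable (P.S.map f₀) (P.S.map f₁) :=
  ⟨_, hc.map_witness_comp_comp_π0 hs, hc.map_witness_comp_comp_π1 hs⟩

lemma witness_map (hc : P.IsFlip c) (hs : P.Summable f₀ f₁) :
    P.witness (P.S.map f₀) (P.S.map f₁) = P.S.map (P.witness f₀ f₁) ≫ c Y :=
  witness_eq_of_comp (hc.map_witness_comp_comp_π0 hs) (hc.map_witness_comp_comp_π1 hs)

lemma sum_map (hc : P.IsFlip c) (hs : P.Summable f₀ f₁) :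
    P.sum (P.S.map f₀) (P.S.map f₁) = P.S.map (P.sum f₀ f₁) := by
  rw [PreSummability.sum, PreSummability.sum, hc.witness_map hs, Category.assoc, hc.comp_σ_app,
    Functor.map_comp]

end IsFlip

end PreSummability

theorem stmt9_general {C : Type u} [Category.{v} C] [HasZeroMorphisms C]
    (P : PreSummability C)
    (c : ∀ X : C, P.S.obj (P.S.obj X) ⟶ P.S.obj (P.S.obj X))
    (hc : ∀ (X : C) (i j : Bool),
      c X ≫ (P.pr j).app (P.S.obj X) ≫ (P.pr i).app X =
        (P.pr i).app (P.S.obj X) ≫ (P.pr j).app X)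
    {X Y : C} (f₀ f₁ : X ⟶ Y) (hs : P.Summable f₀ f₁) :
    P.Summable (P.S.map f₀) (P.S.map f₁) ∧
    P.witness (P.S.map f₀) (P.S.map f₁) = P.S.map (P.witness f₀ f₁) ≫ c Y ∧
    P.sum (P.S.map f₀) (P.S.map f₁) = P.S.map (P.sum f₀ f₁) := by
  have hflip : P.IsFlip c := hc
  exact ⟨hflip.summable_map hs, hflip.witness_map hs, hflip.sum_map hs⟩

theorem stmt9 {C : Type u} [Category.{v} C] [HasZeroMorphisms C]
    (P : PreSummability C) (hwit : P.SWit)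
    (c : ∀ X : C, P.S.obj (P.S.obj X) ⟶ P.S.obj (P.S.obj X))
    (hnat : ∀ {X Y : C} (f : X ⟶ Y),
      P.S.map (P.S.map f) ≫ c Y = c X ≫ P.S.map (P.S.map f))
    (hc : ∀ (X : C) (i j : Bool),
      c X ≫ (P.pr j).app (P.S.obj X) ≫ (P.pr i).app X =
        (P.pr i).app (P.S.obj X) ≫ (P.pr j).app X)
    {X Y : C} (f₀ f₁ : X ⟶ Y) (hs : P.Summable f₀ f₁) :
    P.Summable (P.S.map f₀) (P.S.map f₁) ∧
    P.witness (P.S.map f₀) (P.S.map f₁) = P.S.map (P.witness f₀ f₁) ≫ c Y ∧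
    P.sum (P.S.map f₀) (P.S.map f₁) = P.S.map (P.sum f₀ f₁) :=
  stmt9_general P c hc f₀ f₁ hs
end

section
/- Let 𝓛 be a summable category, i.e. a category with zero morphisms equipped with a summability structure (S, π₀, π₁, σ). If (f_i ∈ 𝓛(X,Y))_{i∈I} and (g_j ∈ 𝓛(Y,Z))_{j∈J} are finite summable families of morphisms, then the family (g_j∘f_i)_{(i,j)∈I×J} is summable in 𝓛(X,Z) and ∑_{(i,j)∈I×J} g_j∘f_i = (∑_{j∈J} g_j) ∘ (∑_{i∈I} f_i). -/
open CategoryTheory Limits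

universe v u

namespace PreSummability

variable {C : Type u} [Category.{v} C] [HasZeroMorphisms C]

/-- The partial addition on a hom-set induced by the summability structure. -/
noncomputable def addOpt (P : PreSummability C) {X Y : C} (f g : X ⟶ Y) :
    Option (X ⟶ Y) :=
  @dite _ (P.Summable f g) (Classical.propDecidable _) (fun _ => some (P.sum f g))
    (fun _ => none)

/-- The (partial) sum of a finite sequence of morphisms, in the partial
commutative monoid structure of the hom-set. -/
noncomputable def sumListHom (P : PreSummability C) {X Y : C}
    (l : List (X ⟶ Y)) : Option (X ⟶ Y) :=
  l.foldl (fun acc a => acc.bind fun s => P.addOpt s a) (some 0)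

end PreSummability

open PreSummability

namespace PreSummability

variable {C : Type u} [Category.{v} C] [HasZeroMorphisms C] (P : PreSummability C)

/-- `SumTo f₀ f₁ v`: `f₀` and `f₁` are summable with sum `v`. -/
def SumTo {Y X : C} (f₀ f₁ v : Y ⟶ X) : Prop :=
  ∃ h : Y ⟶ P.S.obj X, h ≫ P.π0.app X = f₀ ∧ h ≫ P.π1.app X = f₁ ∧ h ≫ P.σ.app X = v

lemma witness_spec {Y X : C} {f₀ f₁ : Y ⟶ X} (hs : P.Summable f₀ f₁) :
    P.witness f₀ f₁ ≫ P.π0.app X = f₀ ∧ P.witness f₀ f₁ ≫ P.π1.app X = f₁ := by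
  unfold witness
  rw [dif_pos hs]
  exact hs.choose_spec

lemma witness_eq {Y X : C} {f₀ f₁ : Y ⟶ X} (h : Y ⟶ P.S.obj X)
    (h0 : h ≫ P.π0.app X = f₀) (h1 : h ≫ P.π1.app X = f₁) :
    P.witness f₀ f₁ = h := by
  have hs : P.Summable f₀ f₁ := ⟨h, h0, h1⟩
  obtain ⟨w0, w1⟩ := P.witness_spec hs
  exact P.jointly_monic _ _ (by rw [w0, h0]) (by rw [w1, h1])

lemma sumTo_iff {Y X : C} {f₀ f₁ v : Y ⟶ X} :
    P.SumTo f₀ f₁ v ↔ P.Summable f₀ f₁ ∧ P.sum f₀ f₁ = v := by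
  constructor
  · rintro ⟨h, h0, h1, hv⟩
    refine ⟨⟨h, h0, h1⟩, ?_⟩
    rw [sum, P.witness_eq h h0 h1, hv]
  · rintro ⟨hs, hv⟩
    obtain ⟨w0, w1⟩ := P.witness_spec hs
    exact ⟨P.witness f₀ f₁, w0, w1, hv⟩

lemma addOpt_eq_some_iff {Y X : C} {f₀ f₁ v : Y ⟶ X} :
    P.addOpt f₀ f₁ = some v ↔ P.SumTo f₀ f₁ v := by
  unfold addOpt
  split_ifs with hs
  · rw [Option.some_inj, P.sumTo_iff]
    exact ⟨fun h => ⟨hs, h⟩, fun h => h.2⟩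
  · exact ⟨fun h => False.elim (by simp at h),
      fun h => absurd ((P.sumTo_iff).mp h).1 hs⟩

lemma sumTo_comm {Y X : C} {f₀ f₁ v : Y ⟶ X} (hcom : P.SCom)
    (h : P.SumTo f₀ f₁ v) : P.SumTo f₁ f₀ v := by
  obtain ⟨w, w0, w1, wv⟩ := h
  obtain ⟨c0, c1⟩ := P.witness_spec (hcom X).1
  simp only [Functor.id_obj] at c0 c1
  have cs : P.witness (P.π1.app X) (P.π0.app X) ≫ P.σ.app X = P.σ.app X := by
    have := (hcom X).2; simpa [PreSummability.sum] using this
  exact ⟨w ≫ P.witness (P.π1.app X) (P.π0.app X),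
    by rw [Category.assoc, c0, w1],
    by rw [Category.assoc, c1, w0],
    by rw [Category.assoc, cs, wv]⟩

lemma sumTo_zero_left {Y X : C} (hzero : P.SZero) (f : Y ⟶ X) :
    P.SumTo (0 : Y ⟶ X) f f := by
  obtain ⟨e0, e1⟩ := P.witness_spec (hzero X).1
  simp only [Functor.id_obj] at e0 e1
  have es : P.witness (0 : X ⟶ X) (𝟙 X) ≫ P.σ.app X = 𝟙 X := by
    have := (hzero X).2; simpa [PreSummability.sum] using this
  exact ⟨f ≫ P.witness (0 : X ⟶ X) (𝟙 X),
    by rw [Category.assoc, e0, comp_zero],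
    by rw [Category.assoc, e1, Category.comp_id],
    by rw [Category.assoc, es, Category.comp_id]⟩

lemma sumTo_zero_right {Y X : C} (hcom : P.SCom) (hzero : P.SZero) (f : Y ⟶ X) :
    P.SumTo f (0 : Y ⟶ X) f :=
  P.sumTo_comm hcom (P.sumTo_zero_left hzero f)

lemma sumTo_whisker_left {W Y X : C} {f₀ f₁ v : Y ⟶ X} (g : W ⟶ Y)
    (h : P.SumTo f₀ f₁ v) : P.SumTo (g ≫ f₀) (g ≫ f₁) (g ≫ v) := by
  obtain ⟨w, w0, w1, wv⟩ := h
  exact ⟨g ≫ w, by rw [Category.assoc, w0], by rw [Category.assoc, w1],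
    by rw [Category.assoc, wv]⟩

lemma sumTo_whisker_right {Y X Z : C} {f₀ f₁ v : Y ⟶ X} (g : X ⟶ Z)
    (h : P.SumTo f₀ f₁ v) : P.SumTo (f₀ ≫ g) (f₁ ≫ g) (v ≫ g) := by
  obtain ⟨w, w0, w1, wv⟩ := h
  refine ⟨w ≫ P.S.map g, ?_, ?_, ?_⟩
  · rw [Category.assoc, P.π0.naturality g, Functor.id_map, ← Category.assoc, w0]
  · rw [Category.assoc, P.π1.naturality g, Functor.id_map, ← Category.assoc, w1]
  · rw [Category.assoc, P.σ.naturality g, Functor.id_map, ← Category.assoc, wv]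

lemma sumTo_assoc (hcom : P.SCom) (hzero : P.SZero) (hwit : P.SWit)
    {W X : C} {f₀ f₁ f₂ s01 t : W ⟶ X}
    (h01 : P.SumTo f₀ f₁ s01) (h012 : P.SumTo s01 f₂ t) :
    ∃ s12, P.SumTo f₁ f₂ s12 ∧ P.SumTo f₀ s12 t := by
  obtain ⟨w, w0, w1, wv⟩ := h01
  obtain ⟨e0, e1⟩ := P.witness_spec (hzero X).1
  simp only [Functor.id_obj] at e0 e1
  have es : P.witness (0 : X ⟶ X) (𝟙 X) ≫ P.σ.app X = 𝟙 X := by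
    have := (hzero X).2; simpa [PreSummability.sum] using this
  set a := f₂ ≫ P.witness (0 : X ⟶ X) (𝟙 X) with ha
  have a0 : a ≫ P.π0.app X = 0 := by rw [ha, Category.assoc, e0, comp_zero]
  have a1 : a ≫ P.π1.app X = f₂ := by rw [ha, Category.assoc, e1, Category.comp_id]
  have as : a ≫ P.σ.app X = f₂ := by rw [ha, Category.assoc, es, Category.comp_id]
  have hsum : P.Summable (w ≫ P.σ.app X) (a ≫ P.σ.app X) := by
    rw [wv, as]
    exact ((P.sumTo_iff).mp h012).1
  obtain ⟨H, H0, H1⟩ := hwit W X w a hsum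
  have key : ∀ (u : P.S.obj X ⟶ X) (τ : P.S ⟶ 𝟭 C),
      (H ≫ P.S.map u) ≫ τ.app X = (H ≫ τ.app (P.S.obj X)) ≫ u := by
    intro u τ
    simp only [Category.assoc, NatTrans.naturality, Functor.id_map]
  -- witness for f₀ + 0
  have hz : P.SumTo f₀ (0 : W ⟶ X) ((H ≫ P.S.map (P.π0.app X)) ≫ P.σ.app X) := by
    refine ⟨H ≫ P.S.map (P.π0.app X), ?_, ?_, rfl⟩
    · rw [key, H0, w0]
    · rw [key, H1, a0]
  have hK0 : (H ≫ P.σ.app (P.S.obj X)) ≫ P.π0.app X = f₀ := by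
    rw [← key (P.π0.app X) P.σ]
    have e1' := (P.sumTo_iff).mp hz
    have e2' := (P.sumTo_iff).mp (P.sumTo_zero_right hcom hzero f₀)
    rw [← e1'.2, e2'.2]
  -- witness for s01 + f₂
  have hw2 : P.SumTo s01 f₂ ((H ≫ P.S.map (P.σ.app X)) ≫ P.σ.app X) := by
    refine ⟨H ≫ P.S.map (P.σ.app X), ?_, ?_, rfl⟩
    · rw [key, H0, wv]
    · rw [key, H1, as]
  have hKσ : (H ≫ P.σ.app (P.S.obj X)) ≫ P.σ.app X = t := by
    rw [← key (P.σ.app X) P.σ]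
    have e1' := (P.sumTo_iff).mp hw2
    have e2' := (P.sumTo_iff).mp h012
    rw [← e1'.2, e2'.2]
  refine ⟨(H ≫ P.σ.app (P.S.obj X)) ≫ P.π1.app X, ?_, ?_⟩
  · refine ⟨H ≫ P.S.map (P.π1.app X), ?_, ?_, ?_⟩
    · rw [key, H0, w1]
    · rw [key, H1, a1]
    · rw [key]
  · exact ⟨H ≫ P.σ.app (P.S.obj X), hK0, rfl, hKσ⟩

lemma sumTo_assoc' (hcom : P.SCom) (hzero : P.SZero) (hwit : P.SWit)
    {W X : C} {a u b su sv : W ⟶ X}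
    (hub : P.SumTo u b su) (hav : P.SumTo a su sv) :
    ∃ w, P.SumTo a u w ∧ P.SumTo w b sv := by
  obtain ⟨s, hba, hus⟩ := P.sumTo_assoc hcom hzero hwit hub (P.sumTo_comm hcom hav)
  obtain ⟨w, hau, hbw⟩ := P.sumTo_assoc hcom hzero hwit hba (P.sumTo_comm hcom hus)
  exact ⟨w, hau, P.sumTo_comm hcom hbw⟩

/-- The fold step of `sumListHom`. -/
noncomputable def step {X Y : C} : Option (X ⟶ Y) → (X ⟶ Y) → Option (X ⟶ Y) :=
  fun acc a => acc.bind fun s => P.addOpt s a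

lemma sumListHom_eq {X Y : C} (l : List (X ⟶ Y)) :
    P.sumListHom l = l.foldl P.step (some 0) := rfl

lemma foldl_step_none {X Y : C} (l : List (X ⟶ Y)) :
    l.foldl P.step none = none := by
  induction l with
  | nil => rfl
  | cons b l ih =>
    rw [List.foldl_cons]
    exact ih

lemma exists_of_foldl_some {X Y : C} {l : List (X ⟶ Y)} {o : Option (X ⟶ Y)}
    {s : X ⟶ Y} (h : l.foldl P.step o = some s) : ∃ u, o = some u := by
  cases o with
  | none => rw [P.foldl_step_none] at h; simp at h
  | some u => exact ⟨u, rfl⟩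

lemma foldl_cons_some {X Y : C} {b : X ⟶ Y} {l : List (X ⟶ Y)} {u s : X ⟶ Y}
    (h : (b :: l).foldl P.step (some u) = some s) :
    ∃ v, P.SumTo u b v ∧ l.foldl P.step (some v) = some s := by
  rw [List.foldl_cons] at h
  obtain ⟨v, hv⟩ := P.exists_of_foldl_some h
  rw [hv] at h
  exact ⟨v, (P.addOpt_eq_some_iff).mp hv, h⟩

lemma foldl_map_left {X Y Z : C} (f : X ⟶ Y) (l : List (Y ⟶ Z)) :
    ∀ {u s : Y ⟶ Z}, l.foldl P.step (some u) = some s →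
      (l.map (fun g => f ≫ g)).foldl P.step (some (f ≫ u)) = some (f ≫ s) := by
  induction l with
  | nil =>
    intro u s h
    simp only [List.foldl_nil, Option.some_inj] at h
    rw [List.map_nil, List.foldl_nil, h]
  | cons b l ih =>
    intro u s h
    obtain ⟨v, huv, h'⟩ := P.foldl_cons_some h
    rw [List.map_cons, List.foldl_cons]
    have hs : P.step (some (f ≫ u)) (f ≫ b) = some (f ≫ v) :=
      (P.addOpt_eq_some_iff).mpr (P.sumTo_whisker_left f huv)
    rw [hs]
    exact ih h'

lemma foldl_map_right {X Y Z : C} (g : Y ⟶ Z) (l : List (X ⟶ Y)) :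
    ∀ {u s : X ⟶ Y}, l.foldl P.step (some u) = some s →
      (l.map (fun f => f ≫ g)).foldl P.step (some (u ≫ g)) = some (s ≫ g) := by
  induction l with
  | nil =>
    intro u s h
    simp only [List.foldl_nil, Option.some_inj] at h
    rw [List.map_nil, List.foldl_nil, h]
  | cons b l ih =>
    intro u s h
    obtain ⟨v, huv, h'⟩ := P.foldl_cons_some h
    rw [List.map_cons, List.foldl_cons]
    have hs : P.step (some (u ≫ g)) (b ≫ g) = some (v ≫ g) :=
      (P.addOpt_eq_some_iff).mpr (P.sumTo_whisker_right g huv)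
    rw [hs]
    exact ih h'

lemma foldl_shift (hcom : P.SCom) (hzero : P.SZero) (hwit : P.SWit)
    {X Y : C} (l : List (X ⟶ Y)) :
    ∀ {u s a t : X ⟶ Y}, l.foldl P.step (some u) = some s → P.SumTo a s t →
      ∃ v, P.SumTo a u v ∧ l.foldl P.step (some v) = some t := by
  induction l with
  | nil =>
    intro u s a t h has
    simp only [List.foldl_nil, Option.some_inj] at h
    subst h
    exact ⟨t, has, by rw [List.foldl_nil]⟩
  | cons b l ih =>
    intro u s a t h has
    obtain ⟨ub, hub, h'⟩ := P.foldl_cons_some h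
    obtain ⟨v', hav, h2⟩ := ih h' has
    obtain ⟨w, haw, hwb⟩ := P.sumTo_assoc' hcom hzero hwit hub hav
    refine ⟨w, haw, ?_⟩
    rw [List.foldl_cons]
    have hs : P.step (some w) b = some v' := (P.addOpt_eq_some_iff).mpr hwb
    rw [hs]
    exact h2

lemma foldl_block (hcom : P.SCom) (hzero : P.SZero) (hwit : P.SWit)
    {X Y Z : C} (f : X ⟶ Y) (lg : List (Y ⟶ Z)) {sg : Y ⟶ Z}
    (hg : P.sumListHom lg = some sg) {a t : X ⟶ Z} (hat : P.SumTo a (f ≫ sg) t) :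
    (lg.map (fun g => f ≫ g)).foldl P.step (some a) = some t := by
  rw [P.sumListHom_eq] at hg
  have h1 : (lg.map (fun g => f ≫ g)).foldl P.step (some (0 : X ⟶ Z)) =
      some (f ≫ sg) := by
    have h := P.foldl_map_left f lg hg
    rwa [comp_zero] at h
  obtain ⟨v, hav, h2⟩ := P.foldl_shift hcom hzero hwit _ h1 hat
  have hv : v = a := by
    have e1 := (P.sumTo_iff).mp hav
    have e2 := (P.sumTo_iff).mp (P.sumTo_zero_right hcom hzero a)
    rw [← e1.2, e2.2]
  rw [hv] at h2
  exact h2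

lemma foldl_main (hcom : P.SCom) (hzero : P.SZero) (hwit : P.SWit)
    {X Y Z : C} (lg : List (Y ⟶ Z)) {sg : Y ⟶ Z}
    (hg : P.sumListHom lg = some sg) :
    ∀ (lf : List (X ⟶ Y)) {a w : X ⟶ Z},
      (lf.map (fun f => f ≫ sg)).foldl P.step (some a) = some w →
      (lf.flatMap fun f => lg.map fun g => f ≫ g).foldl P.step (some a) = some w := by
  intro lf
  induction lf with
  | nil =>
    intro a w h
    simpa using h
  | cons f lf ih =>
    intro a w h
    rw [List.map_cons] at h
    obtain ⟨v, hav, h'⟩ := P.foldl_cons_some h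
    rw [List.flatMap_cons, List.foldl_append,
      P.foldl_block hcom hzero hwit f lg hg hav]
    exact ih h'

end PreSummability


theorem stmt11 {C : Type u} [Category.{v} C] [HasZeroMorphisms C]
    (P : PreSummability C) (hcom : P.SCom) (hzero : P.SZero) (hwit : P.SWit)
    {X Y Z : C} (lf : List (X ⟶ Y)) (lg : List (Y ⟶ Z))
    (sf : X ⟶ Y) (sg : Y ⟶ Z)
    (hf : P.sumListHom lf = some sf) (hg : P.sumListHom lg = some sg) :
    P.sumListHom (lf.flatMap fun f => lg.map fun g => f ≫ g) = some (sf ≫ sg) := by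
  rw [P.sumListHom_eq] at hf ⊢
  have hmap : (lf.map (fun f => f ≫ sg)).foldl P.step (some (0 : X ⟶ Z)) =
      some (sf ≫ sg) := by
    have h := P.foldl_map_right sg lf hf
    rwa [zero_comp] at h
  exact P.foldl_main hcom hzero hwit lg hg lf hmap
end
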